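/- arXiv:2104.14295 — 3 statements merged into one kernel-verified Lean document; each statement's English description precedes it below -/
import Mathlib

section
/- Let m be an exponential on a commutative group G (so m(x) ≠ 0 for all x) and let s be an m-sine function. Then the functions (m, s, s²/m) satisfy the moment relation of order 2: (s²/m)(x*y) = (s²/m)(x)·m(y) + 2·s(x)·s(y) + m(x)·(s²/m)(y); i.e. m, s, s²/m form a generalized moment function sequence of order 2. -/
theorem apply_ne_zero_of_map_mul {G M : Type*} [Group G] [MulZeroClass M] {f : G → M}
    (hf : f ≠ 0) (hmul : ∀ x y : G, f (x * y) = f x * f y) (x : G) : f x ≠ 0 := by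
  intro hx
  refine hf (funext fun z => ?_)
  simpa [hx] using hmul x (x⁻¹ * z)

/-- If `m` is an exponential on a commutative group `G` and `s` is an `m`-sine
function, then `m, s, s²/m` form a generalized moment function sequence of
order `2`: `(s²/m)(x*y) = (s²/m) x * m y + 2 * s x * s y + m x * (s²/m) y`. -/
theorem sq_div_is_second_moment {G : Type*} [CommGroup G] (m s : G → ℂ)
    (hmne : m ≠ 0) (hmul : ∀ x y : G, m (x * y) = m x * m y)
    (hs : ∀ x y : G, s (x * y) = s x * m y + m x * s y) :
    ∀ x y : G, s (x * y) ^ 2 / m (x * y)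
      = (s x ^ 2 / m x) * m y + 2 * s x * s y + m x * (s y ^ 2 / m y) := by
  intro x y
  have hx := apply_ne_zero_of_map_mul hmne hmul x
  have hy := apply_ne_zero_of_map_mul hmne hmul y
  rw [hs, hmul]
  field_simp
  ring
end

section
/- Let m be an exponential on a commutative group G and s an m-sine function. Then for every k ≥ 0, the functions f_j := s^j/m^{j-1}, j = 0,…,k (with f_0 = m), form a generalized moment function sequence of order k: f_j(xy) = Σ_{i=0}^j binom(j,i) f_i(x) f_{j-i}(y). -/
/-- If `m` is an exponential on a commutative group `G` and `s` an `m`-sine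
function, then for every `k`, the functions `f j = s ^ j / m ^ (j - 1)`,
`j = 0, …, k` (with `f 0 = m`), form a generalized moment function sequence
of order `k`. -/
theorem powers_form_moment_seq {G : Type*} [CommGroup G] (m s : G → ℂ)
    (hmne : m ≠ 0) (hmul : ∀ x y : G, m (x * y) = m x * m y)
    (hs : ∀ x y : G, s (x * y) = s x * m y + m x * s y)
    (f : ℕ → G → ℂ)
    (hf0 : ∀ x : G, f 0 x = m x)
    (hf : ∀ j, 1 ≤ j → ∀ x : G, f j x = s x ^ j / m x ^ (j - 1)) :
    ∀ (k : ℕ), ∀ j ≤ k, ∀ x y : G,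
      f j (x * y) = ∑ i ∈ Finset.range (j + 1),
        (j.choose i : ℂ) * f i x * f (j - i) y := by
  -- m is nowhere zero
  have hmz : ∀ x : G, m x ≠ 0 := by
    intro x hx
    apply hmne
    funext y
    have : m y = m (x * (x⁻¹ * y)) := by group
    rw [this, hmul, hx, zero_mul]
    rfl
  -- uniform formula for f
  have hf' : ∀ j (x : G), f j x = s x ^ j * m x / m x ^ j := by
    intro j x
    rcases Nat.eq_zero_or_pos j with h | h
    · subst h; simp [hf0, hmz x]
    · rw [hf j h x]
      obtain ⟨l, rfl⟩ : ∃ l, j = l + 1 := ⟨j - 1, (Nat.succ_pred_eq_of_pos h).symm⟩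
      rw [pow_succ]
      rw [pow_succ]
      rw [mul_div_mul_right _ _ (hmz x), Nat.add_sub_cancel]
  intro k j _ x y
  rw [hf', hs, hmul, add_pow]
  rw [Finset.sum_mul, Finset.sum_div]
  apply Finset.sum_congr rfl
  intro i hi
  have hij : i ≤ j := Nat.lt_succ_iff.mp (Finset.mem_range.mp hi)
  obtain ⟨l, rfl⟩ : ∃ l, j = i + l := ⟨j - i, (Nat.add_sub_cancel' hij).symm⟩
  simp only [Nat.add_sub_cancel_left]
  rw [hf', hf']
  have h1 := hmz x
  have h2 := hmz y
  field_simp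
  ring
end

section
/- If (φ_k)_{k=0}^N and (ψ_k)_{k=0}^N are two generalized moment function sequences on a commutative group G with the same exponential φ_0 = ψ_0 = m, where m is nowhere zero, then the sequence (χ_k)_{k=0}^N defined by χ_k(x) := Σ_{j=0}^k binom(k,j) φ_j(x) ψ_{k-j}(x) / m(x) is a generalized moment function sequence of order N with χ_0 = m. -/
private lemma conv_aux (u v : ℕ → ℂ) (k : ℕ) :
    ∑ j ∈ Finset.range (k + 1), (k.choose j : ℂ) * u j * v (k - j)
      = (k.factorial : ℂ) * ∑ p ∈ Finset.HasAntidiagonal.antidiagonal k,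
          (u p.1 / p.1.factorial) * (v p.2 / p.2.factorial) := by
  rw [Finset.Nat.sum_antidiagonal_eq_sum_range_succ_mk, Finset.mul_sum]
  refine Finset.sum_congr rfl fun j hj => ?_
  have hjk : j ≤ k := Nat.lt_succ_iff.mp (Finset.mem_range.mp hj)
  have hch : ((k.choose j : ℕ) : ℂ) * (j.factorial : ℂ) * ((k - j).factorial : ℂ)
      = (k.factorial : ℂ) := by
    exact_mod_cast congrArg (Nat.cast : ℕ → ℂ)
      (Nat.choose_mul_factorial_mul_factorial hjk)
  have h1 : (j.factorial : ℂ) ≠ 0 := Nat.cast_ne_zero.mpr j.factorial_ne_zero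
  have h2 : ((k - j).factorial : ℂ) ≠ 0 := Nat.cast_ne_zero.mpr (k - j).factorial_ne_zero
  field_simp
  linear_combination (u j * v (k - j)) * hch

/-- If `(φ k)` and `(ψ k)` are generalized moment function sequences of order `N`
on a commutative group `G` with the same exponential `φ 0 = ψ 0 = m`, then
`χ k x = (∑_{j=0}^k binom(k,j) φ j x * ψ (k-j) x) / m x` defines a generalized
moment function sequence of order `N` with `χ 0 = m`. -/
theorem convolution_of_moment_seqs {G : Type*} [CommGroup G] (N : ℕ)
    (m : G → ℂ) (hmne : m ≠ 0) (hmul : ∀ x y : G, m (x * y) = m x * m y)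
    (φ ψ : ℕ → G → ℂ) (hφ0 : φ 0 = m) (hψ0 : ψ 0 = m)
    (hφ : ∀ k ≤ N, ∀ x y : G,
      φ k (x * y) = ∑ j ∈ Finset.range (k + 1),
        (k.choose j : ℂ) * φ j x * φ (k - j) y)
    (hψ : ∀ k ≤ N, ∀ x y : G,
      ψ k (x * y) = ∑ j ∈ Finset.range (k + 1),
        (k.choose j : ℂ) * ψ j x * ψ (k - j) y)
    (χ : ℕ → G → ℂ)
    (hχ : ∀ k (x : G), χ k x
      = (∑ j ∈ Finset.range (k + 1), (k.choose j : ℂ) * φ j x * ψ (k - j) x) / m x) :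
    (∀ x : G, χ 0 x = m x) ∧
    (∀ k ≤ N, ∀ x y : G,
      χ k (x * y) = ∑ j ∈ Finset.range (k + 1),
        (k.choose j : ℂ) * χ j x * χ (k - j) y) := by
  -- m is nowhere zero
  obtain ⟨x₀, hx₀⟩ : ∃ x₀, m x₀ ≠ 0 := by
    by_contra h
    push_neg at h
    exact hmne (funext h)
  have hm : ∀ x : G, m x ≠ 0 := by
    intro x hx
    apply hx₀
    have := hmul x (x⁻¹ * x₀)
    rw [mul_inv_cancel_left] at this
    rw [this, hx, zero_mul]
  constructor
  · intro x
    rw [hχ 0 x]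
    simp [hφ0, hψ0]
  · intro k hk x y
    -- exponential generating power series
    set Φx : PowerSeries ℂ := PowerSeries.mk (fun j => φ j x / j.factorial) with hΦx
    set Φy : PowerSeries ℂ := PowerSeries.mk (fun j => φ j y / j.factorial) with hΦy
    set Ψx : PowerSeries ℂ := PowerSeries.mk (fun j => ψ j x / j.factorial) with hΨx
    set Ψy : PowerSeries ℂ := PowerSeries.mk (fun j => ψ j y / j.factorial) with hΨy
    have hkfac : (k.factorial : ℂ) ≠ 0 := Nat.cast_ne_zero.mpr k.factorial_ne_zero
    -- coefficients of products
    have hcΦ : ∀ j ≤ N, φ j (x * y) / j.factorial = PowerSeries.coeff j (Φx * Φy) := by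
      intro j hj
      rw [PowerSeries.coeff_mul]
      have := conv_aux (fun a => φ a x) (fun a => φ a y) j
      rw [← hφ j hj x y] at this
      have hjfac : (j.factorial : ℂ) ≠ 0 := Nat.cast_ne_zero.mpr j.factorial_ne_zero
      rw [this]
      field_simp [hΦx, hΦy]
      simp only [hΦx, hΦy, PowerSeries.coeff_mk, div_mul_div_comm]
    have hcΨ : ∀ j ≤ N, ψ j (x * y) / j.factorial = PowerSeries.coeff j (Ψx * Ψy) := by
      intro j hj
      rw [PowerSeries.coeff_mul]
      have := conv_aux (fun a => ψ a x) (fun a => ψ a y) j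
      rw [← hψ j hj x y] at this
      have hjfac : (j.factorial : ℂ) ≠ 0 := Nat.cast_ne_zero.mpr j.factorial_ne_zero
      rw [this]
      field_simp [hΨx, hΨy]
      simp only [hΨx, hΨy, PowerSeries.coeff_mk, div_mul_div_comm]
    have hcχx : ∀ j, χ j x / j.factorial = PowerSeries.coeff j (Φx * Ψx) / m x := by
      intro j
      rw [PowerSeries.coeff_mul, hχ j x]
      have := conv_aux (fun a => φ a x) (fun a => ψ a x) j
      rw [this]
      have hjfac : (j.factorial : ℂ) ≠ 0 := Nat.cast_ne_zero.mpr j.factorial_ne_zero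
      simp only [hΦx, hΨx, PowerSeries.coeff_mk]
      field_simp
    have hcχy : ∀ j, χ j y / j.factorial = PowerSeries.coeff j (Φy * Ψy) / m y := by
      intro j
      rw [PowerSeries.coeff_mul, hχ j y]
      have := conv_aux (fun a => φ a y) (fun a => ψ a y) j
      rw [this]
      have hjfac : (j.factorial : ℂ) ≠ 0 := Nat.cast_ne_zero.mpr j.factorial_ne_zero
      simp only [hΦy, hΨy, PowerSeries.coeff_mk]
      field_simp
    -- LHS
    have hLHS : χ k (x * y)
        = (k.factorial : ℂ) * PowerSeries.coeff k ((Φx * Φy) * (Ψx * Ψy))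
            / (m x * m y) := by
      rw [hχ k (x * y), hmul x y]
      congr 1
      rw [conv_aux (fun a => φ a (x * y)) (fun a => ψ a (x * y)) k,
        PowerSeries.coeff_mul, Finset.mul_sum, Finset.mul_sum]
      refine Finset.sum_congr rfl fun p hp => ?_
      rw [Finset.HasAntidiagonal.mem_antidiagonal] at hp
      have hp1 : p.1 ≤ N := le_trans (hp ▸ Nat.le_add_right p.1 p.2) hk
      have hp2 : p.2 ≤ N := le_trans (hp ▸ Nat.le_add_left p.2 p.1) hk
      rw [← hcΦ p.1 hp1, ← hcΨ p.2 hp2]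
    -- RHS
    have hRHS : ∑ j ∈ Finset.range (k + 1), (k.choose j : ℂ) * χ j x * χ (k - j) y
        = (k.factorial : ℂ) * PowerSeries.coeff k ((Φx * Ψx) * (Φy * Ψy))
            / (m x * m y) := by
      rw [conv_aux (fun a => χ a x) (fun a => χ a y) k, PowerSeries.coeff_mul,
        Finset.mul_sum, Finset.mul_sum]
      rw [Finset.sum_div]
      refine Finset.sum_congr rfl fun p hp => ?_
      rw [hcχx p.1, hcχy p.2]
      ring
    rw [hLHS, hRHS]
    congr 2
    ring
end
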